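/- Let E be a real inner product space and f : E → ℝ differentiable everywhere with L-Lipschitz gradient ∇f (L > 0). Assume f is bounded below by f* ∈ ℝ: f(x) ≥ f* for all x ∈ E. Let 0 < α < 2/L, set M = α − Lα²/2 (so M > 0), and define the gradient descent sequence θ⁰ ∈ E, θ^{k+1} = θ^k − α∇f(θ^k). Then for every T ≥ 1 there exists m ∈ {0, …, T−1} with ‖∇f(θ^m)‖² ≤ (f(θ⁰) − f*) / (M · T); equivalently, min_{0 ≤ k < T} ‖∇f(θ^k)‖² ≤ (f(θ⁰) − f*) / (M · T). -/

import Mathlib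

/-- Descent lemma for L-Lipschitz gradients. -/
lemma descent_lemma
    {E : Type*} [NormedAddCommGroup E] [InnerProductSpace ℝ E]
    (f : E → ℝ) (g : E → E)
    (hf : ∀ x : E, HasFDerivAt f (innerSL ℝ (g x)) x)
    (L : ℝ) (hL : 0 < L)
    (hlip : ∀ x y : E, ‖g x - g y‖ ≤ L * ‖x - y‖)
    (x v : E) :
    f (x + v) ≤ f x + inner ℝ (g x) v + L / 2 * ‖v‖ ^ 2 := by
  set ψ : ℝ → ℝ := fun t => f (x + t • v) - t * inner ℝ (g x) v - L * t ^ 2 / 2 * ‖v‖ ^ 2 with hψ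
  have hc : ∀ t : ℝ, HasDerivAt (fun s : ℝ => x + s • v) v t := by
    intro t
    simpa using ((hasDerivAt_id t).smul_const v).const_add x
  have hψ' : ∀ t : ℝ, HasDerivAt ψ
      ((inner ℝ (g (x + t • v)) v : ℝ) - inner ℝ (g x) v - L * t * ‖v‖ ^ 2) t := by
    intro t
    have h1 : HasDerivAt (fun s : ℝ => f (x + s • v)) (inner ℝ (g (x + t • v)) v) t := by
      have := (hf (x + t • v)).comp_hasDerivAt t (hc t)
      exact this
    have h2 : HasDerivAt (fun s : ℝ => s * (inner ℝ (g x) v : ℝ)) (inner ℝ (g x) v) t := by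
      simpa using (hasDerivAt_id t).mul_const (inner ℝ (g x) v : ℝ)
    have h3 : HasDerivAt (fun s : ℝ => L * s ^ 2 / 2 * ‖v‖ ^ 2) (L * t * ‖v‖ ^ 2) t := by
      have := ((hasDerivAt_pow 2 t).const_mul L).div_const 2
      have := this.mul_const (‖v‖ ^ 2)
      convert this using 1
      · rfl
      · rfl
      · ring
    exact (h1.sub h2).sub h3
  have key : ψ 1 ≤ ψ 0 := by
    have hanti : AntitoneOn ψ (Set.Icc 0 1) := by
      apply antitoneOn_of_deriv_nonpos (convex_Icc 0 1)
      · exact Continuous.continuousOn (by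
          have : Continuous ψ := by
            have : Differentiable ℝ ψ := fun t => (hψ' t).differentiableAt
            exact this.continuous
          exact this)
      · intro t ht
        exact (hψ' t).differentiableAt.differentiableWithinAt
      · intro t ht
        rw [interior_Icc] at ht
        rw [(hψ' t).deriv]
        have hcs : (inner ℝ (g (x + t • v)) v : ℝ) - inner ℝ (g x) v ≤ L * t * ‖v‖ ^ 2 := by
          have h1 : (inner ℝ (g (x + t • v)) v : ℝ) - inner ℝ (g x) v
              = inner ℝ (g (x + t • v) - g x) v := by
            rw [inner_sub_left]
          rw [h1]
          calc (inner ℝ (g (x + t • v) - g x) v : ℝ)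
              ≤ ‖g (x + t • v) - g x‖ * ‖v‖ := real_inner_le_norm _ _
            _ ≤ L * ‖(x + t • v) - x‖ * ‖v‖ := by
                have := hlip (x + t • v) x
                exact mul_le_mul_of_nonneg_right this (norm_nonneg v)
            _ = L * t * ‖v‖ ^ 2 := by
                rw [add_sub_cancel_left, norm_smul, Real.norm_eq_abs,
                  abs_of_pos ht.1]
                ring
        linarith
    exact hanti (by norm_num) (by norm_num) (by norm_num)
  simp only [hψ, one_smul, one_pow, zero_smul, add_zero, zero_mul, zero_pow, mul_zero,
    sub_zero, zero_div] at key
  linarith [key]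

/-- Paper's Theorem 3 (upper bound of the gradient in convergence): for gradient
descent on an `L`-smooth function bounded below, for every `T ≥ 1` some iterate
`m < T` satisfies `‖∇f(θ^m)‖² ≤ (f(θ⁰) - f*) / (M T)` with `M = α - Lα²/2`. -/
theorem gradient_descent_min_gradient_bound
    {E : Type*} [NormedAddCommGroup E] [InnerProductSpace ℝ E]
    (f : E → ℝ) (g : E → E)
    (hf : ∀ x : E, HasFDerivAt f (innerSL ℝ (g x)) x)
    (L : ℝ) (hL : 0 < L)
    (hlip : ∀ x y : E, ‖g x - g y‖ ≤ L * ‖x - y‖)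
    (fstar : ℝ) (hfstar : ∀ x : E, fstar ≤ f x)
    (α : ℝ) (hα0 : 0 < α) (hα2 : α < 2 / L)
    (M : ℝ) (hM : M = α - L * α ^ 2 / 2)
    (θ : ℕ → E) (hθ : ∀ k : ℕ, θ (k + 1) = θ k - α • g (θ k)) :
    ∀ T : ℕ, 1 ≤ T →
      ∃ m : ℕ, m < T ∧ ‖g (θ m)‖ ^ 2 ≤ (f (θ 0) - fstar) / (M * T) := by
  have hαL : α * L < 2 := by
    rwa [lt_div_iff₀ hL] at hα2
  have hMpos : 0 < M := by nlinarith
  -- one-step decrease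
  have step : ∀ k : ℕ, f (θ (k + 1)) ≤ f (θ k) - M * ‖g (θ k)‖ ^ 2 := by
    intro k
    have := descent_lemma f g hf L hL hlip (θ k) (-(α • g (θ k)))
    have hiθ : θ (k + 1) = θ k + -(α • g (θ k)) := by rw [hθ k]; abel
    rw [← hiθ] at this
    have h1 : (inner ℝ (g (θ k)) (-(α • g (θ k))) : ℝ) = -(α * ‖g (θ k)‖ ^ 2) := by
      rw [inner_neg_right, real_inner_smul_right, real_inner_self_eq_norm_sq]
    have h2 : ‖-(α • g (θ k))‖ ^ 2 = α ^ 2 * ‖g (θ k)‖ ^ 2 := by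
      rw [norm_neg, norm_smul, Real.norm_eq_abs, abs_of_pos hα0, mul_pow]
    rw [h1, h2] at this
    nlinarith [this]
  -- telescoping
  have tele : ∀ T : ℕ, (∑ k ∈ Finset.range T, M * ‖g (θ k)‖ ^ 2) ≤ f (θ 0) - f (θ T) := by
    intro T
    induction T with
    | zero => simp
    | succ n ih =>
        rw [Finset.sum_range_succ]
        have := step n
        linarith
  intro T hT
  obtain ⟨m, hm, hmin⟩ := Finset.exists_min_image (Finset.range T)
    (fun k => ‖g (θ k)‖ ^ 2) ⟨0, Finset.mem_range.mpr hT⟩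
  rw [Finset.mem_range] at hm
  refine ⟨m, hm, ?_⟩
  have hsum : (T : ℝ) * (M * ‖g (θ m)‖ ^ 2) ≤ f (θ 0) - fstar := by
    calc (T : ℝ) * (M * ‖g (θ m)‖ ^ 2)
        = ∑ _k ∈ Finset.range T, M * ‖g (θ m)‖ ^ 2 := by
          rw [Finset.sum_const, Finset.card_range, nsmul_eq_mul]
      _ ≤ ∑ k ∈ Finset.range T, M * ‖g (θ k)‖ ^ 2 := by
          apply Finset.sum_le_sum
          intro k hk
          exact mul_le_mul_of_nonneg_left (hmin k hk) hMpos.le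
      _ ≤ f (θ 0) - f (θ T) := tele T
      _ ≤ f (θ 0) - fstar := by linarith [hfstar (θ T)]
  have hTpos : (0 : ℝ) < T := by exact_mod_cast hT
  rw [le_div_iff₀ (by positivity)]
  nlinarith [hsum]
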